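/- For consecutive ADI block iterates with a complex conjugate pair of shifts μ_i and μ_{i+1} = μ̄_i (Im(μ_i) ≠ 0), where V_i = (Aᵀ + μ_iEᵀ)⁻¹W_{i−1} and V_{i+1} = (Aᵀ + μ̄_iEᵀ)⁻¹W_i with W_i = W_{i−1} − 2Re(μ_i)EᵀV_i and W_{i−1} real, it holds that V_{i+1} = V̄_i + 2δ_i Im(V_i), where δ_i = Re(μ_i)/Im(μ_i) and V̄_i denotes entrywise complex conjugation. -/

import Mathlib

/-! Conjugating `(Aᵀ + μ Eᵀ) V = W` entrywise, with `A`, `E`, `W` real, gives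
`(Aᵀ + μ̄ Eᵀ) V̄ = W`. The two pencils differ by `2 i Im μ • Eᵀ` and `V - V̄ = 2 i Im V`, so
subtracting yields `(Aᵀ + μ̄ Eᵀ) Im V = -Im μ • Eᵀ V`. Hence `Aᵀ + μ̄ Eᵀ` maps `V̄ + 2 δ Im V`
to `W - 2 Re μ • Eᵀ V`, the right-hand side of the second iterate. -/

open Matrix ComplexConjugate

namespace Matrix

variable {m q : Type*}

lemma map_conj_map_ofReal (W : Matrix m q ℝ) :
    (W.map Complex.ofReal).map conj = W.map Complex.ofReal := by
  ext i j
  simp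

lemma map_conj_ofReal_add_smul (P Q : Matrix m m ℝ) (μ : ℂ) :
    (P.map Complex.ofReal + μ • Q.map Complex.ofReal).map conj
      = P.map Complex.ofReal + conj μ • Q.map Complex.ofReal := by
  ext i j
  simp

lemma sub_map_conj (V : Matrix m q ℂ) :
    V - V.map conj = (2 * Complex.I) • V.map (fun z => (z.im : ℂ)) := by
  ext i j
  simp only [sub_apply, map_apply, smul_apply, smul_eq_mul, Complex.sub_conj]
  push_cast
  ring

lemma add_conj_smul_eq_sub (M E : Matrix m m ℂ) (μ : ℂ) :
    M + conj μ • E = M + μ • E - (2 * Complex.I * μ.im) • E := by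
  rw [add_sub_assoc, ← sub_smul]
  congr 2
  have h := Complex.sub_conj μ
  push_cast at h
  linear_combination -h

variable [Fintype m]

lemma add_conj_smul_mul_map_im {M E : Matrix m m ℂ} {V W : Matrix m q ℂ} {μ : ℂ}
    (hV : (M + μ • E) * V = W) (hconj : (M + conj μ • E) * V.map conj = W) :
    (M + conj μ • E) * V.map (fun z => (z.im : ℂ)) = -(μ.im : ℂ) • (E * V) := by
  have h2I : (2 * Complex.I) ≠ 0 := by simp
  apply smul_right_injective _ h2I
  calc (2 * Complex.I) • ((M + conj μ • E) * V.map (fun z => (z.im : ℂ)))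
      = (M + conj μ • E) * V - (M + conj μ • E) * V.map conj := by
        rw [← Matrix.mul_smul, ← sub_map_conj, Matrix.mul_sub]
    _ = (2 * Complex.I) • (-(μ.im : ℂ) • (E * V)) := by
        rw [hconj, add_conj_smul_eq_sub, Matrix.sub_mul, hV, smul_mul, smul_smul]
        simp

lemma add_conj_smul_mul_eq {M E : Matrix m m ℂ} {V W : Matrix m q ℂ} {μ : ℂ} (him : μ.im ≠ 0)
    (hV : (M + μ • E) * V = W) (hconj : (M + conj μ • E) * V.map conj = W) :
    (M + conj μ • E) * (V.map conj + (2 * ((μ.re / μ.im : ℝ) : ℂ)) • V.map (fun z => (z.im : ℂ)))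
      = W - (2 * (μ.re : ℂ)) • (E * V) := by
  rw [Matrix.mul_add, hconj, Matrix.mul_smul, add_conj_smul_mul_map_im hV hconj, smul_smul,
    sub_eq_add_neg, ← neg_smul]
  congr 3
  have : (μ.im : ℂ) ≠ 0 := Complex.ofReal_ne_zero.mpr him
  push_cast
  field_simp

end Matrix

theorem adi_conjugate_pair_iterate_general (n q : ℕ)
    (E A : Matrix (Fin n) (Fin n) ℝ) (W : Matrix (Fin n) (Fin q) ℝ)
    (μ : ℂ) (him : μ.im ≠ 0)
    (h1 : IsUnit ((A.map (Complex.ofReal))ᵀ + μ • (E.map (Complex.ofReal))ᵀ))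
    (h2 : IsUnit ((A.map (Complex.ofReal))ᵀ + (starRingEnd ℂ μ) • (E.map (Complex.ofReal))ᵀ)) :
    let Ac := A.map (Complex.ofReal)
    let Ec := E.map (Complex.ofReal)
    let V := (Acᵀ + μ • Ecᵀ)⁻¹ * (W.map (Complex.ofReal))
    let W' := W.map (Complex.ofReal) - ((2 : ℂ) * (μ.re : ℂ)) • (Ecᵀ * V)
    (Acᵀ + (starRingEnd ℂ μ) • Ecᵀ)⁻¹ * W'
      = V.map (starRingEnd ℂ) + ((2 : ℂ) * ((μ.re / μ.im : ℝ) : ℂ)) •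
          (V.map (fun z => ((z.im : ℝ) : ℂ))) := by
  intro Ac Ec V W'
  have hV : (Acᵀ + μ • Ecᵀ) * V = W.map Complex.ofReal :=
    mul_nonsing_inv_cancel_left _ _ ((isUnit_iff_isUnit_det _).mp h1)
  have hconj : (Acᵀ + conj μ • Ecᵀ) * V.map conj = W.map Complex.ofReal := by
    rw [← map_conj_map_ofReal W, ← hV, Matrix.map_mul (L := Acᵀ + μ • Ecᵀ)]
    exact congrArg (· * V.map conj) (map_conj_ofReal_add_smul Aᵀ Eᵀ μ).symm
  exact (congrArg _ (add_conj_smul_mul_eq him hV hconj)).symm.trans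
    (nonsing_inv_mul_cancel_left _ _ ((isUnit_iff_isUnit_det _).mp h2))

theorem adi_conjugate_pair_iterate (n q : ℕ)
    (E A : Matrix (Fin n) (Fin n) ℝ) (W : Matrix (Fin n) (Fin q) ℝ)
    (μ : ℂ) (hre : μ.re < 0) (him : μ.im ≠ 0)
    (h1 : IsUnit ((A.map (Complex.ofReal))ᵀ + μ • (E.map (Complex.ofReal))ᵀ))
    (h2 : IsUnit ((A.map (Complex.ofReal))ᵀ + (starRingEnd ℂ μ) • (E.map (Complex.ofReal))ᵀ)) :
    let Ac := A.map (Complex.ofReal)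
    let Ec := E.map (Complex.ofReal)
    let V := (Acᵀ + μ • Ecᵀ)⁻¹ * (W.map (Complex.ofReal))
    let W' := W.map (Complex.ofReal) - ((2 : ℂ) * (μ.re : ℂ)) • (Ecᵀ * V)
    (Acᵀ + (starRingEnd ℂ μ) • Ecᵀ)⁻¹ * W'
      = V.map (starRingEnd ℂ) + ((2 : ℂ) * ((μ.re / μ.im : ℝ) : ℂ)) •
          (V.map (fun z => ((z.im : ℝ) : ℂ))) :=
  adi_conjugate_pair_iterate_general n q E A W μ him h1 h2
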